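/- arXiv:0803.4439 — 5 statements merged into one kernel-verified Lean document; each statement's English description precedes it below -/
import Mathlib

section
/- For every integer n ≥ 2 there exists a real number β_n ∈ (1,2) such that U_n = (β_n, 2); that is, the set of β ∈ (1,2) for which Σ_β contains a periodic sequence of smallest period n is a nonempty open interval whose right endpoint is 2 and whose left endpoint β_n is not itself in U_n. -/
/-!
For `1 < β ≤ 2`, a 0-1 sequence is a unique `β`-expansion iff after each of its digits `0` the
tail has value `< 1`, and the same holds for its mirror image: a tail of value `t ≥ 1` after a
`0` lets that `0` be raised to `1`, the remaining `t - 1` being re-expanded greedily. These strict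
inequalities only become easier as `β` grows, and for a periodic sequence they are finitely many
and continuous in `β`. Hence `U n` is an up-set of `(1, 2)` that is open on the left, i.e. an
interval `(β_n, 2)`. It is nonempty since `(0^(n-1) 1)^∞` satisfies the inequalities at `β = 2`,
hence slightly below `2`. Finally `β_n > 1`: a non-constant `n`-periodic sequence contains a
factor `01`, and the tail after that `0` is worth at least `1/β + 1/β^(n+1) ≥ 1` as soon as
`β^n (β - 1) ≤ 1`.
-/

/-- A 0-1 sequence: all values are at most 1. Index `k` corresponds to `ε_{k+1}` in the paper. -/
def isSeq (ε : ℕ → ℕ) : Prop := ∀ k, ε k ≤ 1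

/-- The shift map σ. -/
def shift (ε : ℕ → ℕ) : ℕ → ℕ := fun n => ε (n + 1)

/-- The mirror image ε̄, (ε̄)_n = 1 - ε_n. -/
def mirror (ε : ℕ → ℕ) : ℕ → ℕ := fun n => 1 - ε n

/-- Strict lexicographic order on sequences. -/
def lexLt (a b : ℕ → ℕ) : Prop := ∃ k, (∀ j, j < k → a j = b j) ∧ a k < b k

/-- Non-strict lexicographic order. -/
def lexLe (a b : ℕ → ℕ) : Prop := lexLt a b ∨ a = b

/-- ε is periodic with smallest period n ≥ 1. -/
def periodicSmallest (n : ℕ) (ε : ℕ → ℕ) : Prop :=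
  1 ≤ n ∧ shift^[n] ε = ε ∧ ∀ j, 1 ≤ j → j < n → shift^[j] ε ≠ ε

/-- π_β(ε) = Σ_{k≥1} ε_k β^{-k}. -/
noncomputable def piB (β : ℝ) (ε : ℕ → ℕ) : ℝ := ∑' k : ℕ, (ε k : ℝ) / β ^ (k + 1)

/-- ε is a unique β-expansion. -/
def memSigma (β : ℝ) (ε : ℕ → ℕ) : Prop :=
  isSeq ε ∧ ∀ ε', isSeq ε' → piB β ε' = piB β ε → ε' = ε

/-- U_n: the set of β ∈ (1,2) such that Σ_β contains a periodic sequence of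
smallest period n. -/
def U (n : ℕ) : Set ℝ :=
  {β | 1 < β ∧ β < 2 ∧ ∃ ε, memSigma β ε ∧ periodicSmallest n ε}

open Filter Topology

lemma shift_iterate_apply (ε : ℕ → ℕ) (k m : ℕ) : shift^[k] ε m = ε (m + k) := by
  induction k generalizing ε with
  | zero => rfl
  | succ k ih => rw [Function.iterate_succ_apply, ih]; rfl

lemma mirror_shift_iterate (ε : ℕ → ℕ) (k : ℕ) : mirror (shift^[k] ε) = shift^[k] (mirror ε) :=
  funext fun m => by simp only [mirror, shift_iterate_apply]

lemma isSeq.shift_iterate {ε : ℕ → ℕ} (h : isSeq ε) (k : ℕ) : isSeq (shift^[k] ε) :=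
  fun m => by rw [shift_iterate_apply]; exact h _

lemma isSeq_mirror (ε : ℕ → ℕ) : isSeq (mirror ε) := fun _ => Nat.sub_le _ _

lemma isSeq.mirror_mirror {ε : ℕ → ℕ} (h : isSeq ε) : mirror (mirror ε) = ε :=
  funext fun k => by have := h k; simp only [mirror]; omega

section piB

variable {β : ℝ} {ε ε' : ℕ → ℕ}

lemma summable_piB (hβ : 1 < β) (hε : isSeq ε) :
    Summable fun k => (ε k : ℝ) / β ^ (k + 1) := by
  have hβ0 : 0 < β := by linarith
  have hgeom : Summable fun k => (β⁻¹) ^ k :=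
    summable_geometric_of_lt_one (by positivity) (inv_lt_one_of_one_lt₀ hβ)
  refine hgeom.of_nonneg_of_le (fun k => by positivity) fun k => ?_
  rw [inv_pow, ← one_div]
  gcongr
  · exact_mod_cast hε k
  · exact hβ.le
  · omega

lemma piB_nonneg (hβ : 0 ≤ β) : 0 ≤ piB β ε :=
  tsum_nonneg fun k => by positivity

lemma piB_mirror (hβ : 1 < β) (hε : isSeq ε) : piB β (mirror ε) = (β - 1)⁻¹ - piB β ε := by
  have hβ0 : 0 < β := by linarith
  have hsum : piB β ε + piB β (mirror ε) = ∑' k : ℕ, β⁻¹ * (β⁻¹) ^ k := by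
    rw [piB, piB, ← (summable_piB hβ hε).tsum_add (summable_piB hβ (isSeq_mirror ε))]
    congr 1 with k
    have hk : ((mirror ε k : ℕ) : ℝ) = 1 - ε k := by
      simp [mirror, Nat.cast_sub (hε k)]
    rw [hk, ← add_div, add_sub_cancel, ← pow_succ', inv_pow, one_div]
  rw [tsum_mul_left, tsum_geometric_of_lt_one (by positivity) (inv_lt_one_of_one_lt₀ hβ)] at hsum
  have : β⁻¹ * (1 - β⁻¹)⁻¹ = (β - 1)⁻¹ := by field_simp
  linarith

lemma piB_le (hβ : 1 < β) (hε : isSeq ε) : piB β ε ≤ (β - 1)⁻¹ := by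
  have := piB_nonneg (ε := mirror ε) (by linarith : 0 ≤ β)
  rw [piB_mirror hβ hε] at this
  linarith

lemma mul_piB_eq (hβ : 1 < β) (hε : isSeq ε) : β * piB β ε = ε 0 + piB β (shift ε) := by
  have hβ0 : β ≠ 0 := by positivity
  rw [piB, (summable_piB hβ hε).tsum_eq_zero_add, mul_add, ← tsum_mul_left, piB]
  congr 1
  · field_simp; ring
  · congr 1 with k
    simp only [shift, pow_succ]
    field_simp

lemma mul_piB_shift_iterate (hβ : 1 < β) (hε : isSeq ε) (k : ℕ) :
    β * piB β (shift^[k] ε) = ε k + piB β (shift^[k + 1] ε) := by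
  rw [mul_piB_eq hβ (hε.shift_iterate k), shift_iterate_apply, zero_add,
    Function.iterate_succ_apply']

lemma piB_eq_of_eq_of_piB_shift_iterate_eq (hβ : 1 < β) (hε : isSeq ε) (hε' : isSeq ε')
    {k : ℕ} (hpre : ∀ j < k, ε' j = ε j) (htail : piB β (shift^[k] ε') = piB β (shift^[k] ε)) :
    piB β ε' = piB β ε := by
  induction k with
  | zero => exact htail
  | succ k ih =>
    refine ih (fun j hj => hpre j (by omega)) (mul_left_cancel₀ (by positivity : β ≠ 0) ?_)
    rw [mul_piB_shift_iterate hβ hε', mul_piB_shift_iterate hβ hε, htail, hpre k k.lt_succ_self]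

lemma piB_anti (hβ : 1 < β) {β' : ℝ} (hle : β ≤ β') (hε : isSeq ε) : piB β' ε ≤ piB β ε := by
  have hβ0 : 0 < β := by linarith
  refine (summable_piB (hβ.trans_le hle) hε).tsum_le_tsum (fun k => ?_) (summable_piB hβ hε)
  gcongr

lemma continuousAt_piB (hβ : 1 < β) (hε : isSeq ε) : ContinuousAt (fun b => piB b ε) β := by
  obtain ⟨c, hc, hcβ⟩ := exists_between hβ
  have hcont : ContinuousOn (fun b => piB b ε) (Set.Ioi c) := by
    refine continuousOn_tsum (u := fun k => (c⁻¹) ^ k) (fun k => ?_)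
      (summable_geometric_of_lt_one (by positivity) (inv_lt_one_of_one_lt₀ hc)) fun k b hb => ?_
    · exact continuousOn_const.div (continuousOn_id.pow _)
        fun b hb => pow_ne_zero _ (by linarith [show c < b from hb])
    · have hb : c < b := hb
      have hb0 : 0 < b := by linarith
      rw [Real.norm_of_nonneg (by positivity), inv_pow, ← one_div]
      have hpow : c ^ k ≤ b ^ (k + 1) :=
        (pow_le_pow_left₀ (by linarith) hb.le k).trans (pow_le_pow_right₀ (by linarith) k.le_succ)
      gcongr
      exact_mod_cast hε k
  exact hcont.continuousAt (Ioi_mem_nhds hcβ)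

end piB

section greedy

variable {β y : ℝ}

noncomputable def greedyRem (β y : ℝ) : ℕ → ℝ
  | 0 => y
  | m + 1 => if 1 ≤ β * greedyRem β y m then β * greedyRem β y m - 1 else β * greedyRem β y m

noncomputable def greedyDigit (β y : ℝ) (m : ℕ) : ℕ := if 1 ≤ β * greedyRem β y m then 1 else 0

lemma isSeq_greedyDigit (β y : ℝ) : isSeq (greedyDigit β y) := fun m => by
  unfold greedyDigit; split <;> norm_num

lemma greedyRem_succ (m : ℕ) :
    greedyRem β y (m + 1) = β * greedyRem β y m - greedyDigit β y m := by
  simp only [greedyRem, greedyDigit]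
  split <;> simp

lemma greedyRem_mem_Icc (hβ : 1 < β) (hβ2 : β ≤ 2) (hy : y ∈ Set.Icc 0 (β - 1)⁻¹) (m : ℕ) :
    greedyRem β y m ∈ Set.Icc 0 (β - 1)⁻¹ := by
  have hc : (β - 1)⁻¹ * (β - 1) = 1 := inv_mul_cancel₀ (by linarith)
  have hc1 : 1 ≤ (β - 1)⁻¹ := one_le_inv₀ (by linarith) |>.2 (by linarith)
  induction m with
  | zero => exact hy
  | succ m ih =>
    obtain ⟨h0, h1⟩ := ih
    have hβr : β * greedyRem β y m ≤ β * (β - 1)⁻¹ := by gcongr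
    simp only [greedyRem]
    split <;> constructor <;> nlinarith

lemma sum_greedyDigit_div (hβ : 0 < β) (M : ℕ) :
    ∑ m ∈ Finset.range M, (greedyDigit β y m : ℝ) / β ^ (m + 1) = y - greedyRem β y M / β ^ M := by
  induction M with
  | zero => simp [greedyRem]
  | succ M ih =>
    rw [Finset.sum_range_succ, ih, greedyRem_succ, pow_succ]
    field_simp
    ring

lemma exists_piB_eq (hβ : 1 < β) (hβ2 : β ≤ 2) (hy : y ∈ Set.Icc 0 (β - 1)⁻¹) :
    ∃ ε, isSeq ε ∧ piB β ε = y := by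
  have hβ0 : 0 < β := by linarith
  refine ⟨greedyDigit β y, isSeq_greedyDigit β y, HasSum.tsum_eq ?_⟩
  rw [hasSum_iff_tendsto_nat_of_nonneg (fun k => by positivity)]
  simp_rw [sum_greedyDigit_div hβ0]
  have hgeom : Tendsto (fun M => (β - 1)⁻¹ * (β⁻¹) ^ M) atTop (𝓝 0) := by
    simpa using (tendsto_pow_atTop_nhds_zero_of_lt_one (by positivity)
      (inv_lt_one_of_one_lt₀ hβ)).const_mul (β - 1)⁻¹
  have hrem : Tendsto (fun M => greedyRem β y M / β ^ M) atTop (𝓝 0) := by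
    refine squeeze_zero (fun M => ?_) (fun M => ?_) hgeom
    · have := (greedyRem_mem_Icc hβ hβ2 hy M).1
      positivity
    · rw [div_eq_mul_inv, ← inv_pow]
      gcongr
      exact (greedyRem_mem_Icc hβ hβ2 hy M).2
  simpa using tendsto_const_nhds.sub hrem

end greedy

def TailsAfterZerosLtOne (β : ℝ) (ε : ℕ → ℕ) : Prop :=
  ∀ k, ε k = 0 → piB β (shift^[k + 1] ε) < 1

section criterion

variable {β : ℝ} {ε ε' : ℕ → ℕ}

lemma TailsAfterZerosLtOne.mono (hβ : 1 < β) {β' : ℝ} (hle : β ≤ β') (hε : isSeq ε)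
    (h : TailsAfterZerosLtOne β ε) : TailsAfterZerosLtOne β' ε :=
  fun k hk => (piB_anti hβ hle (hε.shift_iterate _)).trans_lt (h k hk)

lemma eq_zero_of_piB_shift_iterate_eq (hβ : 1 < β) (hε : isSeq ε) (hε' : isSeq ε')
    (hc : TailsAfterZerosLtOne β ε) {k : ℕ} (hk : ε k = 0)
    (h : piB β (shift^[k] ε') = piB β (shift^[k] ε)) : ε' k = 0 := by
  rcases Nat.le_one_iff_eq_zero_or_eq_one.mp (hε' k) with h0 | h1
  · exact h0
  · have h' := mul_piB_shift_iterate hβ hε' k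
    rw [h, mul_piB_shift_iterate hβ hε, hk, h1] at h'
    have := hc k hk
    have := piB_nonneg (ε := shift^[k + 1] ε') (by linarith : 0 ≤ β)
    push_cast at h'
    linarith

lemma digit_eq_of_piB_shift_iterate_eq (hβ : 1 < β) (hε : isSeq ε) (hε' : isSeq ε')
    (hc : TailsAfterZerosLtOne β ε) (hcm : TailsAfterZerosLtOne β (mirror ε)) {k : ℕ}
    (h : piB β (shift^[k] ε') = piB β (shift^[k] ε)) : ε' k = ε k := by
  rcases Nat.le_one_iff_eq_zero_or_eq_one.mp (hε k) with h0 | h1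
  · rw [h0, eq_zero_of_piB_shift_iterate_eq hβ hε hε' hc h0 h]
  · have hm : mirror ε k = 0 := by simp [mirror, h1]
    have hmirror : piB β (shift^[k] (mirror ε')) = piB β (shift^[k] (mirror ε)) := by
      rw [← mirror_shift_iterate, ← mirror_shift_iterate, piB_mirror hβ (hε'.shift_iterate k),
        piB_mirror hβ (hε.shift_iterate k), h]
    have hm' :=
      eq_zero_of_piB_shift_iterate_eq hβ (isSeq_mirror ε) (isSeq_mirror ε') hcm hm hmirror
    have := hε' k
    simp only [mirror] at hm'
    omega

lemma eq_of_piB_eq (hβ : 1 < β) (hε : isSeq ε) (hε' : isSeq ε')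
    (hc : TailsAfterZerosLtOne β ε) (hcm : TailsAfterZerosLtOne β (mirror ε))
    (h : piB β ε' = piB β ε) : ε' = ε := by
  have htails : ∀ k, piB β (shift^[k] ε') = piB β (shift^[k] ε) := by
    intro k
    induction k with
    | zero => exact h
    | succ k ih =>
      have hd := digit_eq_of_piB_shift_iterate_eq hβ hε hε' hc hcm ih
      have := mul_piB_shift_iterate hβ hε' k
      rw [ih, mul_piB_shift_iterate hβ hε, hd] at this
      linarith
  exact funext fun k => digit_eq_of_piB_shift_iterate_eq hβ hε hε' hc hcm (htails k)

lemma memSigma_mirror (hβ : 1 < β) (h : memSigma β ε) : memSigma β (mirror ε) := by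
  refine ⟨isSeq_mirror ε, fun ε' hε' hv => ?_⟩
  have : mirror ε' = ε := h.2 _ (isSeq_mirror ε') (by
    rw [piB_mirror hβ hε', hv, piB_mirror hβ h.1]
    ring)
  rw [← this, hε'.mirror_mirror]

lemma memSigma.tailsAfterZerosLtOne (hβ : 1 < β) (hβ2 : β ≤ 2) (h : memSigma β ε) :
    TailsAfterZerosLtOne β ε := by
  intro k hk
  by_contra! htail
  set t := piB β (shift^[k + 1] ε)
  obtain ⟨δ, hδ, hδt⟩ := exists_piB_eq (y := t - 1) hβ hβ2
    ⟨by linarith, by linarith [piB_le hβ (h.1.shift_iterate (k + 1))]⟩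
  set ε' : ℕ → ℕ := fun j => if j < k then ε j else if j = k then 1 else δ (j - (k + 1))
  have hε' : isSeq ε' := fun j => by
    simp only [ε']
    split_ifs
    exacts [h.1 j, le_rfl, hδ _]
  have hk' : ε' k = 1 := by simp [ε']
  have htail' : shift^[k + 1] ε' = δ := funext fun m => by
    simp only [shift_iterate_apply, ε']
    rw [if_neg (by omega), if_neg (by omega), Nat.add_sub_cancel]
  have hval : piB β ε' = piB β ε := by
    refine piB_eq_of_eq_of_piB_shift_iterate_eq hβ h.1 hε' (k := k)
      (fun j hj => if_pos hj) (mul_left_cancel₀ (by positivity : β ≠ 0) ?_)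
    rw [mul_piB_shift_iterate hβ hε', mul_piB_shift_iterate hβ h.1, hk', hk, htail', hδt]
    push_cast
    ring
  have := congrFun (h.2 ε' hε' hval) k
  rw [hk', hk] at this
  exact one_ne_zero this

theorem memSigma_iff (hβ : 1 < β) (hβ2 : β ≤ 2) :
    memSigma β ε ↔ isSeq ε ∧ TailsAfterZerosLtOne β ε ∧ TailsAfterZerosLtOne β (mirror ε) :=
  ⟨fun h => ⟨h.1, h.tailsAfterZerosLtOne hβ hβ2,
      (memSigma_mirror hβ h).tailsAfterZerosLtOne hβ hβ2⟩,
    fun ⟨hε, hc, hcm⟩ => ⟨hε, fun _ hε' => eq_of_piB_eq hβ hε hε' hc hcm⟩⟩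

end criterion

section periodic

variable {β : ℝ} {ε : ℕ → ℕ} {n : ℕ}

lemma TailsAfterZerosLtOne.eventually_nhds (hβ : 1 < β) (hε : isSeq ε) (hn : 0 < n)
    (hp : shift^[n] ε = ε) (h : TailsAfterZerosLtOne β ε) :
    ∀ᶠ b in 𝓝 β, TailsAfterZerosLtOne b ε := by
  have hfin : ∀ᶠ b in 𝓝 β, ∀ k ∈ Finset.range n, ε k = 0 → piB b (shift^[k + 1] ε) < 1 := by
    refine (eventually_all_finset _).2 fun k _ => ?_
    by_cases hk : ε k = 0
    · exact (Tendsto.eventually_lt_const (h k hk) (continuousAt_piB hβ (hε.shift_iterate _))).mono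
        fun _ hb _ => hb
    · exact Eventually.of_forall fun _ hk' => absurd hk' hk
  filter_upwards [hfin] with b hb k hk
  have hmod : shift^[k % n] ε = shift^[k] ε := Function.IsPeriodicPt.iterate_mod_apply hp k
  have hdigit : ε (k % n) = ε k := by simpa [shift_iterate_apply] using congrFun hmod 0
  rw [Function.iterate_succ_apply', ← hmod, ← Function.iterate_succ_apply' shift (k % n) ε]
  exact hb _ (Finset.mem_range.2 (Nat.mod_lt k hn)) (hdigit.trans hk)

lemma exists_eq_zero_and_succ_eq_one (hε : isSeq ε) (hn : 0 < n) (hp : shift^[n] ε = ε)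
    (hne : shift ε ≠ ε) : ∃ k, ε k = 0 ∧ ε (k + 1) = 1 := by
  by_contra! h
  have hanti : Antitone ε := antitone_nat_of_succ_le fun k => by
    have := h k; have := hε k; have := hε (k + 1); omega
  refine hne (funext fun k => le_antisymm (hanti k.le_succ) ?_)
  calc ε k = ε (k + n) := by rw [← shift_iterate_apply ε n k, hp]
    _ ≤ ε (k + 1) := hanti (by omega)

lemma not_tailsAfterZerosLtOne (hβ : 1 < β) (hβn : β ^ n * (β - 1) ≤ 1) (hε : isSeq ε)
    (hn : 0 < n) (hp : shift^[n] ε = ε) (hne : shift ε ≠ ε) : ¬ TailsAfterZerosLtOne β ε := by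
  intro h
  obtain ⟨k, hk0, hk1⟩ := exists_eq_zero_and_succ_eq_one hε hn hp hne
  have hβ0 : 0 < β := by linarith
  have hη0 : shift^[k + 1] ε 0 = 1 := by rw [shift_iterate_apply, zero_add, hk1]
  have hηn : shift^[k + 1] ε n = 1 := by
    rw [shift_iterate_apply, add_comm n, ← shift_iterate_apply ε n (k + 1), hp, hk1]
  have hlow : ∑ j ∈ {0, n}, (shift^[k + 1] ε j : ℝ) / β ^ (j + 1) ≤ piB β (shift^[k + 1] ε) :=
    (summable_piB hβ (hε.shift_iterate (k + 1))).sum_le_tsum _ fun j _ => by positivity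
  rw [Finset.sum_pair hn.ne, hη0, hηn, Nat.cast_one, zero_add, pow_one] at hlow
  have hone : 1 ≤ 1 / β + 1 / β ^ (n + 1) := by
    rw [pow_succ, div_add_div _ _ hβ0.ne' (by positivity), le_div_iff₀ (by positivity)]
    nlinarith
  linarith [h k hk0]

end periodic

section oneEvery

def oneEvery (n k : ℕ) : ℕ := if (k + 1) % n = 0 then 1 else 0

variable {β : ℝ} {n : ℕ}

lemma isSeq_oneEvery (n : ℕ) : isSeq (oneEvery n) := fun k => by
  unfold oneEvery; split <;> norm_num

lemma shift_iterate_oneEvery (n : ℕ) : shift^[n] (oneEvery n) = oneEvery n :=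
  funext fun k => by simp [shift_iterate_apply, oneEvery, add_right_comm k n 1]

lemma periodicSmallest_oneEvery (hn : 1 ≤ n) : periodicSmallest n (oneEvery n) := by
  refine ⟨hn, shift_iterate_oneEvery n, fun j hj hjn hper => ?_⟩
  have h := congrFun hper (n - 1 - j)
  rw [shift_iterate_apply] at h
  simp only [oneEvery] at h
  rw [show n - 1 - j + j + 1 = n by omega, Nat.mod_self,
    Nat.mod_eq_of_lt (by omega : n - 1 - j + 1 < n)] at h
  simp at h

lemma piB_shift_iterate_oneEvery (hβ : 1 < β) (hn : 0 < n) (k : ℕ) :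
    piB β (shift^[k] (oneEvery n)) = β ^ (k % n) / (β ^ n - 1) := by
  have hζ := isSeq_oneEvery n
  have hinit : ∀ m < n, piB β (shift^[m] (oneEvery n)) = β ^ m * piB β (oneEvery n) := by
    intro m hm
    induction m with
    | zero => simp
    | succ m ih =>
      have h := mul_piB_shift_iterate hβ hζ m
      rw [ih (by omega), oneEvery, if_neg (by rw [Nat.mod_eq_of_lt hm]; omega)] at h
      push_cast at h
      linear_combination -h
  have hval : piB β (oneEvery n) = 1 / (β ^ n - 1) := by
    have h := mul_piB_shift_iterate hβ hζ (n - 1)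
    rw [hinit (n - 1) (by omega), oneEvery, Nat.sub_add_cancel hn, if_pos (Nat.mod_self n),
      shift_iterate_oneEvery] at h
    have hβn : β * β ^ (n - 1) = β ^ n := by rw [← pow_succ', Nat.sub_add_cancel hn]
    have hpos : 0 < β ^ n - 1 := by linarith [one_lt_pow₀ hβ hn.ne']
    rw [eq_div_iff hpos.ne']
    push_cast at h
    linear_combination h - piB β (oneEvery n) * hβn
  rw [← Function.IsPeriodicPt.iterate_mod_apply (shift_iterate_oneEvery n),
    hinit _ (Nat.mod_lt _ hn), hval, mul_one_div]

lemma tailsAfterZerosLtOne_two_oneEvery (hn : 2 ≤ n) :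
    TailsAfterZerosLtOne 2 (oneEvery n) := by
  intro k _
  rw [piB_shift_iterate_oneEvery one_lt_two (by omega)]
  have hm : (k + 1) % n ≤ n - 1 := Nat.le_sub_one_of_lt (Nat.mod_lt _ (by omega))
  have hnat : 2 ^ ((k + 1) % n) + 1 < 2 ^ n := by
    have h1 : 2 ^ ((k + 1) % n) ≤ 2 ^ (n - 1) := Nat.pow_le_pow_right two_pos hm
    have h2 : 2 ^ 1 ≤ 2 ^ (n - 1) := Nat.pow_le_pow_right two_pos (by omega)
    have h3 : 2 ^ n = 2 * 2 ^ (n - 1) := by rw [← pow_succ']; congr; omega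
    omega
  have hreal : (2 : ℝ) ^ ((k + 1) % n) + 1 < 2 ^ n := by exact_mod_cast hnat
  rw [div_lt_one (by linarith [pow_pos (two_pos : (0 : ℝ) < 2) ((k + 1) % n)])]
  linarith

lemma tailsAfterZerosLtOne_two_mirror_oneEvery (hn : 2 ≤ n) :
    TailsAfterZerosLtOne 2 (mirror (oneEvery n)) := by
  intro k hk
  have hmod : (k + 1) % n = 0 := by
    by_contra h
    simp [mirror, oneEvery, h] at hk
  rw [← mirror_shift_iterate, piB_mirror one_lt_two ((isSeq_oneEvery n).shift_iterate _),
    piB_shift_iterate_oneEvery one_lt_two (by omega), hmod, pow_zero]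
  norm_num
  exact one_lt_pow₀ one_lt_two (by omega)

end oneEvery

lemma eq_Ioo_csInf_of_exists_lt {α : Type*} [ConditionallyCompleteLinearOrder α] {S : Set α}
    {b : α} (hne : S.Nonempty) (hbdd : BddBelow S) (hb : S ⊆ Set.Iio b)
    (hup : ∀ x ∈ S, ∀ y, x < y → y < b → y ∈ S) (hlt : ∀ x ∈ S, ∃ y ∈ S, y < x) :
    S = Set.Ioo (sInf S) b := by
  ext x
  constructor
  · intro hx
    obtain ⟨y, hy, hyx⟩ := hlt x hx
    exact ⟨(csInf_le hbdd hy).trans_lt hyx, hb hx⟩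
  · rintro ⟨hx, hxb⟩
    obtain ⟨y, hy, hyx⟩ := exists_lt_of_csInf_lt hne hx
    exact hup y hy x hyx hxb

section U

variable {β : ℝ} {n : ℕ}

lemma exists_lt_mem_U (hβ : 1 < β) (hβ2 : β ≤ 2) {ε : ℕ → ℕ} (hε : isSeq ε)
    (hp : periodicSmallest n ε) (hc : TailsAfterZerosLtOne β ε)
    (hcm : TailsAfterZerosLtOne β (mirror ε)) : ∃ γ ∈ U n, γ < β := by
  have hn := hp.1
  have hper := hp.2.1
  have hperm : shift^[n] (mirror ε) = mirror ε := by rw [← mirror_shift_iterate, hper]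
  have hev := (hc.eventually_nhds hβ hε hn hper).and
    ((hcm.eventually_nhds hβ (isSeq_mirror ε) hn hperm).and (eventually_gt_nhds hβ))
  obtain ⟨γ, ⟨hγc, hγcm, hγ⟩, hγβ : γ < β⟩ :=
    ((hev.filter_mono nhdsWithin_le_nhds).and self_mem_nhdsWithin).exists (f := 𝓝[<] β)
  exact ⟨γ, ⟨hγ, by linarith, ε, (memSigma_iff hγ (by linarith)).2 ⟨hε, hγc, hγcm⟩, hp⟩, hγβ⟩

lemma exists_lt_mem_U_of_mem (hβ : β ∈ U n) : ∃ γ ∈ U n, γ < β := by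
  obtain ⟨hβ1, hβ2, ε, hmem, hp⟩ := hβ
  obtain ⟨hε, hc, hcm⟩ := (memSigma_iff hβ1 hβ2.le).1 hmem
  exact exists_lt_mem_U hβ1 hβ2.le hε hp hc hcm

lemma mem_U_of_lt (hβ : β ∈ U n) {β' : ℝ} (hlt : β < β') (hβ' : β' < 2) : β' ∈ U n := by
  obtain ⟨hβ1, hβ2, ε, hmem, hp⟩ := hβ
  obtain ⟨hε, hc, hcm⟩ := (memSigma_iff hβ1 hβ2.le).1 hmem
  refine ⟨hβ1.trans hlt, hβ', ε, (memSigma_iff (hβ1.trans hlt) hβ'.le).2 ⟨hε, ?_, ?_⟩, hp⟩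
  exacts [hc.mono hβ1 hlt.le hε, hcm.mono hβ1 hlt.le (isSeq_mirror ε)]

lemma U_nonempty (hn : 2 ≤ n) : (U n).Nonempty := by
  obtain ⟨γ, hγ, -⟩ := exists_lt_mem_U one_lt_two le_rfl (isSeq_oneEvery n)
    (periodicSmallest_oneEvery (by omega)) (tailsAfterZerosLtOne_two_oneEvery hn)
    (tailsAfterZerosLtOne_two_mirror_oneEvery hn)
  exact ⟨γ, hγ⟩

lemma one_add_inv_two_pow_lt_of_mem_U (hn : 2 ≤ n) (hβ : β ∈ U n) : 1 + (2 ^ n)⁻¹ < β := by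
  obtain ⟨hβ1, hβ2, ε, hmem, hp⟩ := hβ
  have hne : shift ε ≠ ε := by simpa using hp.2.2 1 le_rfl (by omega)
  have hβn : 1 < β ^ n * (β - 1) := by
    by_contra! h
    exact not_tailsAfterZerosLtOne hβ1 h hmem.1 hp.1 hp.2.1 hne
      (hmem.tailsAfterZerosLtOne hβ1 hβ2.le)
  have h2n : β ^ n < 2 ^ n := pow_lt_pow_left₀ hβ2 (by linarith) (by omega)
  have : (2 ^ n : ℝ)⁻¹ < β - 1 := by
    rw [inv_lt_iff_one_lt_mul₀ (by positivity)]
    nlinarith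
  linarith

end U

/-- For every n ≥ 2 there is β_n ∈ (1,2) with U_n = (β_n, 2). -/
theorem stmt0 : ∀ n : ℕ, 2 ≤ n → ∃ βn : ℝ, 1 < βn ∧ βn < 2 ∧ U n = Set.Ioo βn 2 := by
  intro n hn
  obtain ⟨β, hβ⟩ := U_nonempty hn
  have hbdd : BddBelow (U n) := ⟨1, fun γ hγ => hγ.1.le⟩
  refine ⟨sInf (U n), ?_, (csInf_le hbdd hβ).trans_lt hβ.2.1, ?_⟩
  · calc (1 : ℝ) < 1 + (2 ^ n)⁻¹ := lt_add_of_pos_right _ (by positivity)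
      _ ≤ sInf (U n) := le_csInf ⟨β, hβ⟩ fun γ hγ => (one_add_inv_two_pow_lt_of_mem_U hn hγ).le
  · exact eq_Ioo_csInf_of_exists_lt ⟨β, hβ⟩ hbdd (fun γ hγ => hγ.2.1)
      (fun γ hγ _ => mem_U_of_lt hγ) fun γ hγ => exists_lt_mem_U_of_mem hγ
end

section
/- There exist no β, β̃ ∈ (1,2) such that d'(β) is defined and d'(β) ≺ d(β̃) ≺ d(β) in the lexicographic order. -/
/-- The greedy expansion d(β) of 1 in base β (0-indexed: `greedy β n` is ε_{n+1}). -/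
noncomputable def greedy (β : ℝ) : ℕ → ℕ :=
  fun n => (⌊β * ((fun x => Int.fract (β * x))^[n] 1)⌋).toNat

/-- d(β) is finite with last 1 at (0-based) position N. -/
def greedyFinite (β : ℝ) (N : ℕ) : Prop :=
  greedy β N = 1 ∧ ∀ k, N < k → greedy β k = 0

/-- The quasi-greedy expansion d'(β) = (ε_1 … ε_{N} 0)^∞ (block of length N+1),
where N is the 0-based position of the last 1 of d(β). -/
noncomputable def quasiGreedy (β : ℝ) (N : ℕ) : ℕ → ℕ :=
  fun k => if k % (N + 1) = N then 0 else greedy β (k % (N + 1))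

/- ============ auxiliary ============ -/

lemma lexLt_trans {a b c : ℕ → ℕ} (h1 : lexLt a b) (h2 : lexLt b c) : lexLt a c := by
  obtain ⟨k, hk, hklt⟩ := h1
  obtain ⟨l, hl, hllt⟩ := h2
  rcases lt_trichotomy k l with h | h | h
  · exact ⟨k, fun j hj => (hk j hj).trans (hl j (hj.trans h)),
      by rw [← hl k h]; exact hklt⟩
  · subst h
    exact ⟨k, fun j hj => (hk j hj).trans (hl j hj), hklt.trans hllt⟩
  · exact ⟨l, fun j hj => (hk j (hj.trans h)).trans (hl j hj),
      by rw [hk l h]; exact hllt⟩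

lemma lexLt_irrefl {a : ℕ → ℕ} (h : lexLt a a) : False := by
  obtain ⟨k, _, hk⟩ := h; exact lt_irrefl _ hk

lemma shift_iterate (ε : ℕ → ℕ) (m n : ℕ) : shift^[m] ε n = ε (n + m) := by
  induction m generalizing ε n with
  | zero => rfl
  | succ m ih =>
    rw [Function.iterate_succ_apply, ih]
    show ε (n + m + 1) = ε (n + (m + 1))
    ring_nf

noncomputable def xs (β : ℝ) : ℕ → ℝ := fun n => (fun x => Int.fract (β * x))^[n] 1

lemma xs_zero (β : ℝ) : xs β 0 = 1 := rfl

lemma xs_succ (β : ℝ) (n : ℕ) : xs β (n + 1) = Int.fract (β * xs β n) :=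
  Function.iterate_succ_apply' _ _ _

lemma xs_nonneg (β : ℝ) (n : ℕ) : 0 ≤ xs β n := by
  cases n with
  | zero => norm_num [xs_zero]
  | succ n => rw [xs_succ]; exact Int.fract_nonneg _

lemma xs_le_one (β : ℝ) (n : ℕ) : xs β n ≤ 1 := by
  cases n with
  | zero => simp [xs_zero]
  | succ n => rw [xs_succ]; exact (Int.fract_lt_one _).le

lemma xs_lt_one (β : ℝ) {m : ℕ} (hm : 1 ≤ m) : xs β m < 1 := by
  cases m with
  | zero => omega
  | succ n => rw [xs_succ]; exact Int.fract_lt_one _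

lemma greedy_cast (β : ℝ) (hβ : 0 < β) (n : ℕ) :
    (greedy β n : ℝ) = ⌊β * xs β n⌋ := by
  have h0 : (0 : ℤ) ≤ ⌊β * xs β n⌋ :=
    Int.floor_nonneg.mpr (mul_nonneg hβ.le (xs_nonneg β n))
  show ((⌊β * xs β n⌋).toNat : ℝ) = _
  exact_mod_cast Int.toNat_of_nonneg h0

lemma greedy_le_one (β : ℝ) (hβ1 : 1 < β) (hβ2 : β < 2) : isSeq (greedy β) := by
  intro n
  show (⌊β * xs β n⌋).toNat ≤ 1
  rw [Int.toNat_le]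
  have : β * xs β n < 2 := by nlinarith [xs_le_one β n, xs_nonneg β n]
  have := Int.floor_lt.mpr (by exact_mod_cast this : β * xs β n < ((2:ℤ):ℝ))
  omega

lemma xs_succ_eq (β : ℝ) (hβ : 0 < β) (n : ℕ) :
    xs β (n + 1) = β * xs β n - greedy β n := by
  rw [xs_succ, Int.fract, greedy_cast β hβ]

lemma parry_key (β : ℝ) (hβ : 0 < β) (m : ℕ) :
    ∀ n, (∀ j, j < n → greedy β (j + m) = greedy β j) →
      xs β n - xs β (n + m) = β ^ n * (1 - xs β m) := by
  intro n
  induction n with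
  | zero => intro _; simp [xs_zero]
  | succ n ih =>
    intro h
    have hn := ih (fun j hj => h j (by omega))
    have e1 := xs_succ_eq β hβ n
    have e2 : xs β (n + 1 + m) = β * xs β (n + m) - greedy β (n + m) := by
      have hnm : n + 1 + m = (n + m) + 1 := by omega
      rw [hnm, xs_succ_eq β hβ]
    have hg : (greedy β (n + m) : ℝ) = greedy β n := by
      rw [h n (by omega)]
    rw [e1, e2, hg, pow_succ]
    calc β * xs β n - ↑(greedy β n) - (β * xs β (n + m) - ↑(greedy β n))
        = β * (xs β n - xs β (n + m)) := by ring
      _ = β * (β ^ n * (1 - xs β m)) := by rw [hn]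
      _ = β ^ n * β * (1 - xs β m) := by ring

lemma parry (β : ℝ) (hβ1 : 1 < β) (hβ2 : β < 2) {m : ℕ} (hm : 1 ≤ m) :
    lexLt (shift^[m] (greedy β)) (greedy β) := by
  have hβ0 : (0:ℝ) < β := by linarith
  have hD : 0 < 1 - xs β m := by linarith [xs_lt_one β hm]
  have hex : ∃ k, greedy β (k + m) ≠ greedy β k := by
    by_contra hc
    push_neg at hc
    obtain ⟨n, hn⟩ := pow_unbounded_of_one_lt ((1:ℝ) / (1 - xs β m)) hβ1
    have hkey := parry_key β hβ0 m n (fun j _ => hc j)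
    have h1 : xs β n - xs β (n + m) ≤ 1 := by
      linarith [xs_le_one β n, xs_nonneg β (n + m)]
    have h2 : (1:ℝ) < β ^ n * (1 - xs β m) := by
      rw [div_lt_iff₀ hD] at hn; linarith
    linarith
  set k := Nat.find hex with hkdef
  have hagree : ∀ j, j < k → greedy β (j + m) = greedy β j := by
    intro j hj
    have := Nat.find_min hex hj
    exact not_not.mp this
  have hdiff : greedy β (k + m) ≠ greedy β k := Nat.find_spec hex
  have hval := parry_key β hβ0 m k hagree
  have hpos : 0 < β ^ k * (1 - xs β m) := by positivity
  have hlt : xs β (k + m) < xs β k := by linarith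
  have hle : greedy β (k + m) ≤ greedy β k := by
    have : β * xs β (k + m) ≤ β * xs β k := by nlinarith
    have hfl : ⌊β * xs β (k + m)⌋ ≤ ⌊β * xs β k⌋ := Int.floor_le_floor this
    show (⌊β * xs β (k+m)⌋).toNat ≤ (⌊β * xs β k⌋).toNat
    omega
  refine ⟨k, fun j hj => ?_, ?_⟩
  · rw [shift_iterate]; exact hagree j hj
  · rw [shift_iterate]; omega

/-- There are no β, β̃ ∈ (1,2) with d'(β) ≺ d(β̃) ≺ d(β). -/
theorem stmt4 : ¬ ∃ (β βt : ℝ) (N : ℕ), (1 < β ∧ β < 2) ∧ (1 < βt ∧ βt < 2) ∧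
    greedyFinite β N ∧ lexLt (quasiGreedy β N) (greedy βt) ∧
    lexLt (greedy βt) (greedy β) := by
  rintro ⟨β, βt, N, ⟨hβ1, hβ2⟩, ⟨ht1, ht2⟩, ⟨hεN, hεafter⟩, h1, h2⟩
  set ε := greedy β with hε
  set η := greedy βt with hη
  set q := quasiGreedy β N with hq
  have hseqε : isSeq ε := greedy_le_one β hβ1 hβ2
  have hseqη : isSeq η := greedy_le_one βt ht1 ht2
  have hqlt : ∀ j, j < N → q j = ε j := by
    intro j hj
    show (if j % (N+1) = N then 0 else ε (j % (N+1))) = ε j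
    rw [Nat.mod_eq_of_lt (by omega)]
    simp [Nat.ne_of_lt hj]
  have hqN : q N = 0 := by
    show (if N % (N+1) = N then 0 else ε (N % (N+1))) = 0
    rw [Nat.mod_eq_of_lt (by omega)]
    simp
  obtain ⟨k0, A0, L0⟩ := h1
  obtain ⟨k1, A1, L1⟩ := h2
  -- basic digit facts
  have hεk1 : ε k1 = 1 := by have := hseqε k1; omega
  have hηk1 : η k1 = 0 := by omega
  have hηk0 : η k0 = 1 := by have := hseqη k0; omega
  have hqk0 : q k0 = 0 := by omega
  have hk1leN : k1 ≤ N := by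
    by_contra h
    have := hεafter k1 (by omega)
    omega
  -- k1 = N
  have hk1N : k1 = N := by
    by_contra h
    have hk1ltN : k1 < N := by omega
    rcases lt_trichotomy k0 k1 with hc | hc | hc
    · have e1 : η k0 = ε k0 := A1 k0 hc
      have e2 : q k0 = ε k0 := hqlt k0 (by omega)
      omega
    · rw [hc] at hηk0; omega
    · have e1 : q k1 = η k1 := A0 k1 hc
      have e2 : q k1 = ε k1 := hqlt k1 hk1ltN
      omega
  rw [hk1N] at A1 L1 hηk1
  -- η agrees with q on 0..N
  have hηq : ∀ j, j ≤ N → η j = q j := by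
    intro j hj
    rcases lt_or_eq_of_le hj with h | h
    · rw [hqlt j h, ← A1 j h]
    · subst h; omega
  have hk0gt : N < k0 := by
    by_contra h
    have := hηq k0 (by omega)
    omega
  -- decompose k0
  set r := k0 % (N + 1) with hr
  set m := (N + 1) * (k0 / (N + 1)) with hm
  have hk0eq : k0 = m + r := by rw [hm, hr]; exact (Nat.div_add_mod k0 (N+1)).symm
  have hrle : r ≤ N := by
    have := Nat.mod_lt k0 (y := N+1) (by omega)
    omega
  have hm1 : 1 ≤ m := by
    have h1 : N + 1 ≤ k0 := by omega
    have h2 : 1 ≤ k0 / (N + 1) := Nat.one_le_div_iff (by omega) |>.mpr h1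
    have := Nat.mul_pos (show 0 < N + 1 by omega) h2
    omega
  -- periodicity of q under adding m
  have hqper : ∀ j, q (j + m) = q j := by
    intro j
    show (if (j + m) % (N+1) = N then 0 else ε ((j+m) % (N+1)))
       = (if j % (N+1) = N then 0 else ε (j % (N+1)))
    have : (j + m) % (N + 1) = j % (N + 1) := by
      rw [hm]; exact Nat.add_mul_mod_self_left j (N+1) _
    rw [this]
  set ζ := shift^[m] η with hζ
  have hζval : ∀ j, ζ j = η (j + m) := fun j => shift_iterate η m j
  have hζη : lexLt ζ η := parry βt ht1 ht2 hm1
  -- ζ agrees with ε below r, and ζ r = 1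
  have hζagree : ∀ j, j < r → ζ j = ε j := by
    intro j hj
    rw [hζval, ← A0 (j + m) (by omega), hqper, hqlt j (by omega)]
  have hζr : ζ r = 1 := by
    rw [hζval]
    have hrm : r + m = k0 := by omega
    rw [hrm]; exact hηk0
  rcases lt_or_eq_of_le hrle with hrN | hrN
  · -- r < N, ε r = 0
    have hεr : ε r = 0 := by
      have : q k0 = ε r := by
        show (if k0 % (N+1) = N then 0 else ε (k0 % (N+1))) = ε r
        rw [← hr]
        simp [Nat.ne_of_lt hrN]
      omega
    have hεζ : lexLt ε ζ := ⟨r, fun j hj => (hζagree j hj).symm, by omega⟩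
    exact lexLt_irrefl (lexLt_trans (lexLt_trans hεζ hζη) ⟨N, A1, L1⟩)
  · -- r = N
    have hζε : lexLt ζ ε := lexLt_trans hζη ⟨N, A1, L1⟩
    obtain ⟨k, B, hB⟩ := hζε
    have hkN : ¬ k ≤ N := by
      intro hk
      rcases lt_or_eq_of_le hk with hlt | heq
      · rw [hζagree k (by omega)] at hB; omega
      · have e1 : ζ k = 1 := by rw [heq, ← hrN]; exact hζr
        have e2 : ε k = 1 := by rw [heq]; exact hεN
        omega
    have := hεafter k (by omega)
    omega
end

section
/- If sequences ε, ε' ∈ Σ satisfy ε ≺ ε' in the lexicographic order, then μ(ε) ≺ μ(ε') and σ(μ(ε)) ≺ σ(μ(ε')). -/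
/-- The doubling map μ: (μ(ε))_1 = 1, (μ(ε))_{2n} = ε_n, (μ(ε))_{2n+1} = 1 - ε_n
(written with 0-based indexing). -/
def mu (ε : ℕ → ℕ) : ℕ → ℕ :=
  fun i => if i = 0 then 1 else if i % 2 = 1 then ε ((i - 1) / 2) else 1 - ε (i / 2 - 1)

/-- μ and σ∘μ are strictly increasing for the lexicographic order. -/
theorem stmt8 (ε ε' : ℕ → ℕ) (h : isSeq ε) (h' : isSeq ε') (hlt : lexLt ε ε') :
    lexLt (mu ε) (mu ε') ∧ lexLt (shift (mu ε)) (shift (mu ε')) := by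
  obtain ⟨k, hpre, hk⟩ := hlt
  have agree : ∀ i, i ≤ 2 * k → mu ε i = mu ε' i := by
    intro i hi
    unfold mu
    rcases Nat.eq_zero_or_pos i with h0 | h0
    · simp [h0]
    · have hne : i ≠ 0 := by omega
      simp only [hne, if_false]
      rcases Nat.even_or_odd i with he | ho
      · obtain ⟨m, hm⟩ := he
        have h2 : i % 2 = 0 := by omega
        have h2' : i % 2 ≠ 1 := by omega
        simp only [h2', if_false]
        rw [hpre (i / 2 - 1) (by omega)]
      · obtain ⟨m, hm⟩ := ho
        have h2 : i % 2 = 1 := by omega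
        simp only [h2, if_true]
        rw [hpre ((i - 1) / 2) (by omega)]
  have hval : ∀ δ : ℕ → ℕ, mu δ (2 * k + 1) = δ k := by
    intro δ
    unfold mu
    have h1 : 2 * k + 1 ≠ 0 := by omega
    have h2 : (2 * k + 1) % 2 = 1 := by omega
    have h3 : (2 * k + 1 - 1) / 2 = k := by omega
    simp [h1, h2, h3]
  constructor
  · exact ⟨2 * k + 1, fun j hj => agree j (by omega), by rw [hval, hval]; exact hk⟩
  · refine ⟨2 * k, fun j hj => ?_, ?_⟩
    · exact agree (j + 1) (by omega)
    · show mu ε (2 * k + 1) < mu ε' (2 * k + 1)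
      rw [hval, hval]; exact hk
end

section
/- Let ε ∈ Σ. If ε ≺ L in the lexicographic order, then ε ≺ μ(ε); and if ε ≻ L, then ε ≻ μ(ε). -/
/-- The Thue–Morse sequence: 𝔪_k = (sum of binary digits of k) mod 2. -/
def thueMorse (k : ℕ) : ℕ := (Nat.digits 2 k).sum % 2

/-- The shifted Thue–Morse sequence L = (𝔪_1, 𝔪_2, …). -/
def L : ℕ → ℕ := fun n => thueMorse (n + 1)


lemma tm_le_one (k : ℕ) : thueMorse k ≤ 1 :=
  Nat.lt_succ_iff.mp (Nat.mod_lt _ (by norm_num))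

lemma tm_two_mul (k : ℕ) : thueMorse (2 * k) = thueMorse k := by
  rcases Nat.eq_zero_or_pos k with h | h
  · simp [h]
  · unfold thueMorse
    rw [Nat.digits_def' (by norm_num : 1 < 2) (by omega)]
    have h1 : (2 * k) % 2 = 0 := by omega
    have h2 : (2 * k) / 2 = k := by omega
    simp [h1, h2]

lemma tm_odd (k : ℕ) : thueMorse (2 * k + 1) = 1 - thueMorse k := by
  unfold thueMorse
  rw [Nat.digits_def' (by norm_num : 1 < 2) (by omega)]
  have h1 : (2 * k + 1) % 2 = 1 := by omega
  have h2 : (2 * k + 1) / 2 = k := by omega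
  rw [h1, h2]
  simp only [List.sum_cons]
  omega

lemma mu_L : mu L = L := by
  funext i
  obtain ⟨n, rfl | rfl⟩ := Nat.even_or_odd' i
  · rcases Nat.eq_zero_or_pos n with h | h
    · subst h; simp [mu, L, thueMorse]
    · obtain ⟨m, rfl⟩ : ∃ m, n = m + 1 := ⟨n - 1, by omega⟩
      have h0 : 2 * (m + 1) ≠ 0 := by omega
      have h1 : (2 * (m + 1)) % 2 = 0 := by omega
      have h2 : (2 * (m + 1)) / 2 - 1 = m := by omega
      simp only [mu, L, h0, if_false, h1, h2]
      norm_num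
      rw [show 2 * (m + 1) + 1 = 2 * m + 1 + 2 from by ring,
        show 2 * m + 1 + 2 = 2 * (m + 1) + 1 from by ring, tm_odd]
  · have h0 : 2 * n + 1 ≠ 0 := by omega
    have h1 : (2 * n + 1) % 2 = 1 := by omega
    have h2 : (2 * n + 1 - 1) / 2 = n := by omega
    simp only [mu, L, h0, if_false, h1, if_pos rfl, h2, if_true]
    rw [show 2 * n + 1 + 1 = 2 * (n + 1) from by ring, tm_two_mul]

lemma mu_eq_L_of_agree (ε : ℕ → ℕ) (k : ℕ) (h : ∀ j, j < k → ε j = L j) :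
    ∀ m, m ≤ 2 * k → mu ε m = L m := by
  intro m hm
  rw [← mu_L]
  unfold mu
  split_ifs with h0 h1
  · rfl
  · rw [h _ (by omega)]
  · rw [h _ (by omega)]

/-- If ε ≺ L then ε ≺ μ(ε); if ε ≻ L then ε ≻ μ(ε). -/
theorem stmt10 (ε : ℕ → ℕ) (hseq : isSeq ε) :
    (lexLt ε L → lexLt ε (mu ε)) ∧ (lexLt L ε → lexLt (mu ε) ε) := by
  constructor
  · rintro ⟨k, hagree, hlt⟩
    have hL : L k ≤ 1 := tm_le_one _
    refine ⟨k, fun j hj => ?_, ?_⟩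
    · rw [hagree j hj, ← mu_eq_L_of_agree ε k hagree j (by omega)]
    · rw [mu_eq_L_of_agree ε k hagree k (by omega)]; omega
  · rintro ⟨k, hagree, hlt⟩
    have hagree' : ∀ j, j < k → ε j = L j := fun j hj => (hagree j hj).symm
    refine ⟨k, fun j hj => ?_, ?_⟩
    · rw [← hagree j hj, mu_eq_L_of_agree ε k hagree' j (by omega)]
    · rw [mu_eq_L_of_agree ε k hagree' k (by omega)]; omega
end

section
/- Let ε ∈ Γ and suppose there exists d ≥ 1 such that ε_{d+j} = 1 − ε_j for all 1 ≤ j ≤ d (i.e., the second block of length d is the complement of the first). Then ε is periodic of period 2d: ε_{2d+j} = ε_j for all j ≥ 1, so that ε = (ε_1 … ε_d ε̄_1 … ε̄_d)^∞. -/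
/-- The set Γ = {ε ∈ Σ : ε̄ ⪯ σ^k(ε) ⪯ ε for all k ≥ 0}. -/
def Gamma (ε : ℕ → ℕ) : Prop :=
  isSeq ε ∧ ∀ k, lexLe (mirror ε) (shift^[k] ε) ∧ lexLe (shift^[k] ε) ε

lemma shift_iter (ε : ℕ → ℕ) (n j : ℕ) : shift^[n] ε j = ε (j + n) := by
  induction n generalizing ε j with
  | zero => rfl
  | succ n ih =>
    rw [Function.iterate_succ_apply, ih]
    simp only [shift]
    ring_nf

/-- If ε ∈ Γ and its second block of length d is the complement of the first,
then ε is periodic of period 2d. (0-based indexing: ε_{d+j} = 1 - ε_j for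
1 ≤ j ≤ d becomes ε (d+j) = 1 - ε j for j < d.) -/
theorem stmt11 (ε : ℕ → ℕ) (hΓ : Gamma ε) (d : ℕ) (hd : 1 ≤ d)
    (h : ∀ j, j < d → ε (d + j) = 1 - ε j) :
    ∀ j, ε (2 * d + j) = ε j := by
  obtain ⟨hseq, hΓ2⟩ := hΓ
  rcases (hΓ2 d).1 with hlt | heq
  · exfalso
    obtain ⟨k, hagree, hk⟩ := hlt
    rw [shift_iter] at hk
    have hks : 1 - ε k < ε (k + d) := hk
    have hεk : ε k = 1 := by have := hseq (k+d); have := hseq k; omega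
    have hεkd : ε (k + d) = 1 := by have := hseq (k+d); omega
    have hagree' : ∀ j, j < k → 1 - ε j = ε (j + d) := by
      intro j hj
      have := hagree j hj
      simpa [mirror, shift_iter] using this
    have hkd : d ≤ k := by
      by_contra hc
      push_neg at hc
      have := h k hc
      rw [show d + k = k + d by ring] at this
      omega
    set t := k - d with ht
    have hkt : k = d + t := by omega
    have hεt : ε t = 0 := by
      have h1 := hagree' t (by omega)
      have h2 : ε (t + d) = 1 := by rw [show t + d = k by omega]; exact hεk
      have := hseq t; omega
    have h2dt : ε (2*d + t) = 1 := by rw [show 2*d+t = k+d by omega]; exact hεkd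
    have hsame : ∀ s, s < t → ε (2*d + s) = ε s := by
      intro s hs
      have ha := hagree' s (by omega)
      have hb := hagree' (d + s) (by omega)
      have := hseq s
      have := hseq (d+s)
      have := hseq (2*d+s)
      rw [show d + s + d = 2*d + s by ring] at hb
      rw [show s + d = d + s by ring] at ha
      omega
    rcases (hΓ2 (2*d)).2 with hlt2 | heq2
    · obtain ⟨m, hag, hm⟩ := hlt2
      rw [shift_iter] at hm
      have hag' : ∀ j, j < m → ε (j + 2*d) = ε j := fun j hj => by
        have := hag j hj; rwa [shift_iter] at this
      rcases lt_trichotomy m t with hc|hc|hc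
      · have := hsame m hc
        rw [show m + 2*d = 2*d + m by ring] at hm; omega
      · rw [show m+2*d = 2*d+m by ring, hc] at hm; omega
      · have := hag' t hc
        rw [show t+2*d = 2*d+t by ring] at this; omega
    · have := congrFun heq2 t
      rw [shift_iter, show t+2*d = 2*d+t by ring] at this
      omega
  · intro j
    have e1 := congrFun heq j
    have e2 := congrFun heq (d + j)
    rw [shift_iter] at e1 e2
    simp only [mirror] at e1 e2
    rw [show d + j + d = 2*d + j by ring] at e2
    have := hseq j; have := hseq (d+j)
    rw [show j + d = d + j by ring] at e1
    omega
end
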